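/- Let 𝕋^n = {z ∈ ℂ^n : |z_1| = ⋯ = |z_n| = 1} be the unit torus. Then the set of functions of the form z ↦ P(z_1, …, z_n, conj(z_1)·⋯·conj(z_n)), where P is a holomorphic polynomial on ℂ^{n+1}, is dense in C(𝕋^n, ℂ) with the uniform norm. (In other words, {z_1, …, z_n, \bar z_1 ⋯ \bar z_n} forms a PD-basis of C^0(𝕋^n).) -/

import Mathlib

/-! By Stone–Weierstrass it suffices that the algebra generated by `z_1, …, z_n` and
`w = z̄_1 ⋯ z̄_n` separates points, which the coordinates do, and is closed under conjugation.
On the torus `z̄_i z_i = 1`, so `z̄_i = w ∏_{k ≠ i} z_k` and `w̄ = z_1 ⋯ z_n` are polynomials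
in the generators. -/

def unitTorus (n : ℕ) : Set (EuclideanSpace ℂ (Fin n)) :=
  {z | ∀ j : Fin n, ‖z j‖ = 1}

open MvPolynomial

theorem ContinuousMap.dense_adjoin_of_star_subset {𝕜 X : Type*} [RCLike 𝕜] [TopologicalSpace X]
    [CompactSpace X] {s : Set C(X, 𝕜)} (hstar : star s ⊆ Algebra.adjoin 𝕜 s)
    (hsep : ∀ ⦃x y : X⦄, x ≠ y → ∃ f ∈ s, f x ≠ f y) :
    Dense (Algebra.adjoin 𝕜 s : Set C(X, 𝕜)) := by
  have hadjoin : (StarAlgebra.adjoin 𝕜 s).toSubalgebra = Algebra.adjoin 𝕜 s :=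
    le_antisymm (Algebra.adjoin_le (Set.union_subset Algebra.subset_adjoin hstar))
      (Algebra.adjoin_mono Set.subset_union_left)
  have hdense := ContinuousMap.starSubalgebra_topologicalClosure_eq_top_of_separatesPoints
    (StarAlgebra.adjoin 𝕜 s) fun x y hxy => by
      obtain ⟨f, hf, hfxy⟩ := hsep hxy
      exact ⟨f, ⟨f, StarAlgebra.subset_adjoin 𝕜 s hf, rfl⟩, hfxy⟩
  rw [dense_iff_closure_eq, ← hadjoin, StarSubalgebra.coe_toSubalgebra,
    ← StarSubalgebra.topologicalClosure_coe, hdense, StarSubalgebra.coe_top]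

theorem isCompact_unitTorus (n : ℕ) : IsCompact (unitTorus n) := by
  have : unitTorus n = PiLp.homeomorph 2 (fun _ : Fin n => ℂ) ⁻¹'
      Set.univ.pi fun _ => Metric.sphere 0 1 := by
    ext z; simp [unitTorus, PiLp.homeomorph]
  rw [this, Homeomorph.isCompact_preimage]
  exact isCompact_univ_pi fun _ => isCompact_sphere 0 1

instance (n : ℕ) : CompactSpace (unitTorus n) :=
  isCompact_iff_compactSpace.mp (isCompact_unitTorus n)

noncomputable def torusCoord (n : ℕ) (i : Fin n) : C(unitTorus n, ℂ) :=
  ⟨fun z => (z : EuclideanSpace ℂ (Fin n)) i, by fun_prop⟩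

@[simp]
theorem torusCoord_apply (n : ℕ) (i : Fin n) (z : unitTorus n) :
    torusCoord n i z = (z : EuclideanSpace ℂ (Fin n)) i := rfl

theorem star_torusCoord_mul_self (n : ℕ) (i : Fin n) :
    star (torusCoord n i) * torusCoord n i = 1 := by
  ext z
  simp [Complex.conj_mul', z.2 i]

theorem star_torusCoord (n : ℕ) (i : Fin n) :
    star (torusCoord n i) =
      (∏ j, star (torusCoord n j)) * ∏ j ∈ Finset.univ.erase i, torusCoord n j := by
  rw [← Finset.mul_prod_erase _ _ (Finset.mem_univ i), mul_assoc, ← Finset.prod_mul_distrib,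
    Finset.prod_eq_one fun j _ => star_torusCoord_mul_self n j, mul_one]

noncomputable def torusGenerators (n : ℕ) : Fin (n + 1) → C(unitTorus n, ℂ) :=
  Fin.snoc (torusCoord n) (∏ i, star (torusCoord n i))

@[simp]
theorem torusGenerators_castSucc (n : ℕ) (i : Fin n) :
    torusGenerators n i.castSucc = torusCoord n i :=
  Fin.snoc_castSucc ..

@[simp]
theorem torusGenerators_last (n : ℕ) :
    torusGenerators n (Fin.last n) = ∏ i, star (torusCoord n i) :=
  Fin.snoc_last ..

theorem star_range_torusGenerators_subset (n : ℕ) :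
    star (Set.range (torusGenerators n)) ⊆ Algebra.adjoin ℂ (Set.range (torusGenerators n)) := by
  have hmem : ∀ j, torusGenerators n j ∈ Algebra.adjoin ℂ (Set.range (torusGenerators n)) :=
    fun j => Algebra.subset_adjoin ⟨j, rfl⟩
  rintro f ⟨j, hj⟩
  rw [← star_star f, ← hj]
  induction j using Fin.lastCases with
  | last =>
    simp only [torusGenerators_last, star_prod, star_star]
    exact Subalgebra.prod_mem _ fun i _ => torusGenerators_castSucc n i ▸ hmem i.castSucc
  | cast i =>
    rw [torusGenerators_castSucc, star_torusCoord, ← torusGenerators_last]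
    exact Subalgebra.mul_mem _ (hmem _)
      (Subalgebra.prod_mem _ fun k _ => torusGenerators_castSucc n k ▸ hmem k.castSucc)

theorem aeval_torusGenerators_apply (n : ℕ) (P : MvPolynomial (Fin (n + 1)) ℂ) (z : unitTorus n) :
    aeval (torusGenerators n) P z =
      eval (Fin.snoc (fun i => (z : EuclideanSpace ℂ (Fin n)) i)
        (∏ j : Fin n, starRingEnd ℂ ((z : EuclideanSpace ℂ (Fin n)) j))) P := by
  rw [← ContinuousMap.evalAlgHom_apply ℂ ℂ z, comp_aeval_apply, ← coe_aeval_eq_eval]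
  refine congrArg (fun x => aeval x P) (funext fun j => ?_)
  induction j using Fin.lastCases <;> simp

theorem torusGenerators_separatesPoints (n : ℕ) ⦃z w : unitTorus n⦄ (hzw : z ≠ w) :
    ∃ f ∈ Set.range (torusGenerators n), f z ≠ f w := by
  obtain ⟨i, hi⟩ : ∃ i, (z : EuclideanSpace ℂ (Fin n)) i ≠ (w : EuclideanSpace ℂ (Fin n)) i := by
    by_contra! h
    exact hzw (Subtype.ext (PiLp.ext h))
  exact ⟨_, ⟨i.castSucc, rfl⟩, by simpa using hi⟩

/-- The polynomial combinations of `z_1, …, z_n, \bar z_1 ⋯ \bar z_n` are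
dense in `C(𝕋^n, ℂ)` with the uniform norm (equivalently, the compact-open topology, since
`𝕋^n` is compact): `{z_1, …, z_n, \bar z_1 ⋯ \bar z_n}` is a PD-basis of `C^0(𝕋^n)`. -/
theorem stmt18 (n : ℕ) :
    Dense {g : C(↥(unitTorus n), ℂ) | ∃ P : MvPolynomial (Fin (n + 1)) ℂ,
      ∀ z : ↥(unitTorus n), g z =
        MvPolynomial.eval
          (Fin.snoc (fun i => (z : EuclideanSpace ℂ (Fin n)) i)
            (∏ j : Fin n, starRingEnd ℂ ((z : EuclideanSpace ℂ (Fin n)) j))) P} := by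
  convert ContinuousMap.dense_adjoin_of_star_subset (star_range_torusGenerators_subset n)
    (torusGenerators_separatesPoints n)
  ext g
  simp only [Set.mem_ofPred_eq, Algebra.adjoin_range_eq_range_aeval, AlgHom.coe_range,
    Set.mem_range, ContinuousMap.ext_iff, aeval_torusGenerators_apply, eq_comm]
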